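/- Let ⊗ be a continuous t-norm on [0,1] and X a partially ordered compact space. For every Φ : CX → [0,1] satisfying (Mon), (Act), (Sup) and condition (A), one has Φ(ψ) ≤ sup_{x ∈ Zero(Φ)} ψ(x) for all ψ ∈ CX (where the supremum over the empty set is 0). -/

import Mathlib

open unitInterval Set

/-- A continuous t-norm on the unit interval `[0,1]`. -/
structure ContinuousTNorm where
  mul : I → I → I
  comm : ∀ x y, mul x y = mul y x
  assoc : ∀ x y z, mul (mul x y) z = mul x (mul y z)
  mono : ∀ ⦃x₁ x₂ y₁ y₂ : I⦄, x₁ ≤ x₂ → y₁ ≤ y₂ → mul x₁ y₁ ≤ mul x₂ y₂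
  continuous : Continuous fun p : I × I => mul p.1 p.2
  one_mul' : ∀ x, mul 1 x = x

/-- The `n`-fold `⊗`-power `xⁿ`. -/
def ContinuousTNorm.pow (T : ContinuousTNorm) (x : I) : ℕ → I
  | 0 => 1
  | n + 1 => T.mul x (T.pow x n)


/-- A continuous antitone (monotone of type `X → [0,1]ᵒᵖ`) map. -/
structure CMap (X : Type*) [TopologicalSpace X] [Preorder X] where
  toFun : X → I
  continuous' : Continuous toFun
  antitone' : Antitone toFun

namespace CMap

variable {X : Type*} [TopologicalSpace X] [Preorder X]

/-- The constant map `1`. -/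
def one : CMap X := ⟨fun _ => 1, continuous_const, fun _ _ _ => le_rfl⟩

/-- Pointwise tensor `ψ₁ ⊗ ψ₂`. -/
def tens (T : ContinuousTNorm) (ψ₁ ψ₂ : CMap X) : CMap X where
  toFun x := T.mul (ψ₁.toFun x) (ψ₂.toFun x)
  continuous' := T.continuous.comp (ψ₁.continuous'.prodMk ψ₂.continuous')
  antitone' := fun _ _ h => T.mono (ψ₁.antitone' h) (ψ₂.antitone' h)

/-- Pointwise action `u ⊗ ψ` of a scalar `u ∈ [0,1]`. -/
def smul (T : ContinuousTNorm) (u : I) (ψ : CMap X) : CMap X where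
  toFun x := T.mul u (ψ.toFun x)
  continuous' := T.continuous.comp (continuous_const.prodMk ψ.continuous')
  antitone' := fun _ _ h => T.mono le_rfl (ψ.antitone' h)

/-- Pointwise binary supremum `ψ₁ ∨ ψ₂`. -/
noncomputable def sup (ψ₁ ψ₂ : CMap X) : CMap X where
  toFun x := max (ψ₁.toFun x) (ψ₂.toFun x)
  continuous' := ψ₁.continuous'.max ψ₂.continuous'
  antitone' := fun _ _ h => max_le_max (ψ₁.antitone' h) (ψ₂.antitone' h)

/-- Truncated subtraction in `[0,1]`. -/
noncomputable def tsubI (a u : I) : I :=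
  ⟨max ((a : ℝ) - u) 0, ⟨le_max_right _ _,
    max_le (by linarith [a.2.2, u.2.1]) zero_le_one⟩⟩

/-- Pointwise truncated subtraction `ψ ⊖ u`. -/
noncomputable def tsub (ψ : CMap X) (u : I) : CMap X where
  toFun x := tsubI (ψ.toFun x) u
  continuous' := by
    apply Continuous.subtype_mk
    exact ((continuous_subtype_val.comp ψ.continuous').sub continuous_const).max continuous_const
  antitone' := fun a b h =>
    Subtype.mk_le_mk.mpr
      (max_le_max (sub_le_sub_right (Subtype.coe_le_coe.2 (ψ.antitone' h)) _) le_rfl)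

end CMap


section Conditions

variable {X : Type*} [TopologicalSpace X] [Preorder X]

/-- `(Mon)`: `Φ` is monotone. -/
def Mon (Φ : CMap X → I) : Prop :=
  ∀ ψ₁ ψ₂ : CMap X, (∀ x, ψ₁.toFun x ≤ ψ₂.toFun x) → Φ ψ₁ ≤ Φ ψ₂

/-- `(Act)`: `Φ(u ⊗ ψ) = u ⊗ Φ(ψ)`. -/
def Act (T : ContinuousTNorm) (Φ : CMap X → I) : Prop :=
  ∀ (u : I) (ψ : CMap X), Φ (CMap.smul T u ψ) = T.mul u (Φ ψ)

/-- `(Sup)`: `Φ(ψ₁ ∨ ψ₂) = Φ(ψ₁) ∨ Φ(ψ₂)`. -/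
def SupC (Φ : CMap X → I) : Prop :=
  ∀ ψ₁ ψ₂ : CMap X, Φ (ψ₁.sup ψ₂) = max (Φ ψ₁) (Φ ψ₂)

/-- `(Ten)lax`: `Φ(ψ₁ ⊗ ψ₂) ≤ Φ(ψ₁) ⊗ Φ(ψ₂)`. -/
def TenLax (T : ContinuousTNorm) (Φ : CMap X → I) : Prop :=
  ∀ ψ₁ ψ₂ : CMap X, Φ (CMap.tens T ψ₁ ψ₂) ≤ T.mul (Φ ψ₁) (Φ ψ₂)

/-- `(Ten)`: `Φ(ψ₁ ⊗ ψ₂) = Φ(ψ₁) ⊗ Φ(ψ₂)`. -/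
def TenC (T : ContinuousTNorm) (Φ : CMap X → I) : Prop :=
  ∀ ψ₁ ψ₂ : CMap X, Φ (CMap.tens T ψ₁ ψ₂) = T.mul (Φ ψ₁) (Φ ψ₂)

/-- `(Top)`: `Φ(1) = 1`. -/
def TopC (Φ : CMap X → I) : Prop := Φ CMap.one = 1

/-- `(Min)`: `Φ(ψ ⊖ u) = Φ(ψ) ⊖ u`. -/
noncomputable def MinC (Φ : CMap X → I) : Prop :=
  ∀ (u : I) (ψ : CMap X), Φ (ψ.tsub u) = CMap.tsubI (Φ ψ) u

/-- Condition `(A)`. -/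
def CondA (Φ : CMap X → I) : Prop :=
  ∀ (x : X) (ψ : CMap X), Φ ψ = 0 → 0 < ψ.toFun x →
    ∃ ψ' : CMap X, ψ'.toFun x = 1 ∧ Φ ψ' = 0

/-- `Zero(Φ) = ⋂ {Zero ψ | Φ ψ = 0}`. -/
def ZeroPhi (Φ : CMap X → I) : Set X := {x | ∀ ψ : CMap X, Φ ψ = 0 → ψ.toFun x = 0}

/-- `Anti(Φ)`. -/
def AntiPhi (Φ : CMap X → I) : Set X := {x | ∀ ψ : CMap X, ψ.toFun x ≤ Φ ψ}

/-- `Φ_A(ψ) = sup_{x ∈ A} ψ(x)`, with `Φ_∅ = 0`. -/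
noncomputable def PhiA (A : Set X) (ψ : CMap X) : I :=
  ⟨sSup ((fun x => (ψ.toFun x : ℝ)) '' A),
   ⟨Real.sSup_nonneg (by rintro r ⟨x, _, rfl⟩; exact (ψ.toFun x).2.1),
    Real.sSup_le (by rintro r ⟨x, _, rfl⟩; exact (ψ.toFun x).2.2) zero_le_one⟩⟩

end Conditions

/-!
Fix `c` above `sup_{Zero(Φ)} ψ` and `t < 1`. The compact set `K = {ψ ≥ c}` misses `Zero(Φ)`, so
by `(A)` each point of `K` has a neighbourhood on which some `ψ̄` with `Φ(ψ̄) = 0` exceeds `t`;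
finitely many of them cover `K`, and their supremum `χ` still has `Φ(χ) = 0` by `(Sup)`. Then
`t ⊗ ψ ≤ c ∨ χ` pointwise, whence `t ⊗ Φ(ψ) ≤ c` by `(Mon)`, `(Act)`, `(Sup)`; letting `t → 1`
(continuity of `⊗`) gives `Φ(ψ) ≤ c`.
-/

namespace ContinuousTNorm

variable (T : ContinuousTNorm)

lemma mul_le_right (a b : I) : T.mul a b ≤ b := by
  simpa only [T.one_mul'] using T.mono (le_one' : a ≤ 1) le_rfl

lemma mul_le_left (a b : I) : T.mul a b ≤ a := T.comm a b ▸ T.mul_le_right b a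

lemma zero_mul (a : I) : T.mul 0 a = 0 := le_antisymm (T.mul_le_left 0 a) nonneg'

lemma mul_one (a : I) : T.mul a 1 = a := T.comm a 1 ▸ T.one_mul' a

lemma le_of_forall_lt_one_mul_le {a c : I} (h : ∀ t < 1, T.mul t a ≤ c) : a ≤ c := by
  have hclosed : IsClosed {t : I | T.mul t a ≤ c} :=
    isClosed_le (T.continuous.comp (continuous_id.prodMk continuous_const)) continuous_const
  have hsub : closure (Iio (1 : I)) ⊆ {t : I | T.mul t a ≤ c} :=
    hclosed.closure_subset_iff.mpr h
  rw [closure_Iio' ⟨0, zero_lt_one⟩] at hsub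
  simpa only [mem_ofPred_eq, T.one_mul'] using hsub (le_refl (1 : I))

end ContinuousTNorm

section Functional

variable {X : Type*} [TopologicalSpace X] [Preorder X] {Φ : CMap X → I}

lemma le_PhiA {A : Set X} {x : X} (hx : x ∈ A) (ψ : CMap X) : ψ.toFun x ≤ PhiA A ψ :=
  Subtype.coe_le_coe.mp <|
    le_csSup ⟨1, by rintro _ ⟨y, -, rfl⟩; exact (ψ.toFun y).2.2⟩ ⟨x, hx, rfl⟩

lemma Act.apply_zero_smul {T : ContinuousTNorm} (hAct : Act T Φ) (ψ : CMap X) :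
    Φ (CMap.smul T 0 ψ) = 0 := by
  rw [hAct, T.zero_mul]

lemma CondA.exists_eq_one_of_notMem_zeroPhi (hA : CondA Φ) {x : X} (hx : x ∉ ZeroPhi Φ) :
    ∃ ψ : CMap X, ψ.toFun x = 1 ∧ Φ ψ = 0 := by
  simp only [ZeroPhi, mem_ofPred_eq, not_forall] at hx
  obtain ⟨ψ, hψ, hψx⟩ := hx
  exact hA x ψ hψ (nonneg'.lt_of_ne (Ne.symm hψx))

lemma CondA.exists_gt_on_isCompact {T : ContinuousTNorm} (hA : CondA Φ) (hAct : Act T Φ)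
    (hSup : SupC Φ) {K : Set X} (hK : IsCompact K) (hKZ : Disjoint K (ZeroPhi Φ))
    {t : I} (ht : t < 1) : ∃ χ : CMap X, Φ χ = 0 ∧ ∀ y ∈ K, t < χ.toFun y := by
  refine hK.induction_on (p := fun S => ∃ χ : CMap X, Φ χ = 0 ∧ ∀ y ∈ S, t < χ.toFun y)
    ⟨_, hAct.apply_zero_smul CMap.one, fun _ h => h.elim⟩
    (fun S S' hSS' ⟨χ, hχ0, hχ⟩ => ⟨χ, hχ0, fun y hy => hχ y (hSS' hy)⟩)
    (fun S S' ⟨χ, hχ0, hχ⟩ ⟨χ', hχ0', hχ'⟩ => ⟨χ.sup χ', by rw [hSup, hχ0, hχ0', max_self], ?_⟩)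
    fun x hx => ?_
  · rintro y (hy | hy)
    · exact (hχ y hy).trans_le (le_max_left _ _)
    · exact (hχ' y hy).trans_le (le_max_right _ _)
  · obtain ⟨ψ, hψx, hψ0⟩ := hA.exists_eq_one_of_notMem_zeroPhi (hKZ.notMem_of_mem_left hx)
    have hopen : IsOpen {y | t < ψ.toFun y} := isOpen_lt continuous_const ψ.continuous'
    have hx' : t < ψ.toFun x := hψx ▸ ht
    exact ⟨_, mem_nhdsWithin_of_mem_nhds (hopen.mem_nhds hx'), ψ, hψ0, fun _ hy => hy⟩

end Functional

theorem phi_le_sup_on_zero_general (T : ContinuousTNorm) {X : Type*} [TopologicalSpace X] [CompactSpace X]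
    [PartialOrder X]
    (Φ : CMap X → I) (hMon : Mon Φ) (hAct : Act T Φ) (hSup : SupC Φ) (hA : CondA Φ) :
    ∀ ψ : CMap X, Φ ψ ≤ PhiA (ZeroPhi Φ) ψ := by
  intro ψ
  refine le_of_forall_gt_imp_ge_of_dense fun c hc => T.le_of_forall_lt_one_mul_le fun t ht => ?_
  set K := {y | c ≤ ψ.toFun y}
  have hK : IsCompact K := (isClosed_le continuous_const ψ.continuous').isCompact
  have hKZ : Disjoint K (ZeroPhi Φ) :=
    disjoint_left.mpr fun x hxK hxZ => (hxK.trans_lt ((le_PhiA hxZ ψ).trans_lt hc)).false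
  obtain ⟨χ, hχ0, hχ⟩ := hA.exists_gt_on_isCompact hAct hSup hK hKZ ht
  have hpt : ∀ y, (CMap.smul T t ψ).toFun y ≤ ((CMap.smul T c CMap.one).sup χ).toFun y := by
    intro y
    by_cases hy : y ∈ K
    · exact ((T.mul_le_left _ _).trans (hχ y hy).le).trans (le_max_right _ _)
    · exact ((T.mul_le_right _ _).trans (not_le.mp hy).le).trans ((T.mul_one c).ge.trans
        (le_max_left _ _))
  calc T.mul t (Φ ψ) = Φ (CMap.smul T t ψ) := (hAct t ψ).symm
    _ ≤ Φ ((CMap.smul T c CMap.one).sup χ) := hMon _ _ hpt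
    _ = max (T.mul c (Φ CMap.one)) 0 := by rw [hSup, hAct, hχ0]
    _ ≤ c := max_le (T.mul_le_left _ _) nonneg'

/-- If `Φ : CX → [0,1]` satisfies `(Mon)`, `(Act)`, `(Sup)` and condition `(A)`, then
`Φ(ψ) ≤ sup_{x ∈ Zero(Φ)} ψ(x)` for every `ψ ∈ CX`. -/
theorem phi_le_sup_on_zero (T : ContinuousTNorm) {X : Type*} [TopologicalSpace X] [CompactSpace X]
    [PartialOrder X] (hle : IsClosed {p : X × X | p.1 ≤ p.2})
    (Φ : CMap X → I) (hMon : Mon Φ) (hAct : Act T Φ) (hSup : SupC Φ) (hA : CondA Φ) :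
    ∀ ψ : CMap X, Φ ψ ≤ PhiA (ZeroPhi Φ) ψ :=
  phi_le_sup_on_zero_general T Φ hMon hAct hSup hA
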